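/- Let u ∈ C^{1/2}([0,1]) with Hölder seminorm H, let V_{2-}^(n) = {k/2^{n+1} : 0 ≤ k ≤ 2^n - 1} and V_{2+}^(n) = {1 - k/2^{n+1} : 0 ≤ k ≤ 2^n - 1}, and define Avg u(x) for x ∈ V_{2-}^(n) as the average of u over [x, x + 2^{-(n+1)}) and for y ∈ V_{2+}^(n) as the average over (y - 2^{-(n+1)}, y]. Then for all x ∈ V_{2-}^(n) and y ∈ V_{2+}^(n), |Avg u(x) - Avg u(y)| ≤ H |y - x|^{1/2}. -/

import Mathlib

/-- Average of `u` over `[x, x + 2^{-(n+1)})`, used for nodes of `V_{2-}^(n)`. -/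
noncomputable def avgLeft (u : ℝ → ℝ) (n : ℕ) (x : ℝ) : ℝ :=
  (2 : ℝ) ^ (n + 1) * ∫ t in x..(x + (1 / 2 : ℝ) ^ (n + 1)), u t

/-- Average of `u` over `(y - 2^{-(n+1)}, y]`, used for nodes of `V_{2+}^(n)`. -/
noncomputable def avgRight (u : ℝ → ℝ) (n : ℕ) (y : ℝ) : ℝ :=
  (2 : ℝ) ^ (n + 1) * ∫ t in (y - (1 / 2 : ℝ) ^ (n + 1))..y, u t

/-!
Translating `[y - δ, y]` onto `[x, x + δ]` moves every point by `c = y - δ - x ∈ [0, y - x]`,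
so the difference of the two averages is the average of `u t - u (t + c)`, and each of these
values is at most `H √c ≤ H √(y - x)` by the Hölder bound.
-/

open Filter Topology

theorem continuousOn_of_abs_sub_le_mul_sqrt {u : ℝ → ℝ} {H : ℝ} {s : Set ℝ}
    (hu : ∀ x ∈ s, ∀ y ∈ s, |u x - u y| ≤ H * √|x - y|) : ContinuousOn u s := by
  intro a ha
  have hbound : Tendsto (fun b ↦ H * √|b - a|) (𝓝[s] a) (𝓝 0) := by
    have := ((continuous_sub_right a).abs.sqrt.const_mul H).tendsto a
    simpa using this.mono_left nhdsWithin_le_nhds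
  rw [ContinuousWithinAt, tendsto_iff_dist_tendsto_zero]
  refine squeeze_zero' (.of_forall fun _ ↦ dist_nonneg) ?_ hbound
  filter_upwards [self_mem_nhdsWithin] with b hb
  exact hu b hb a ha

theorem abs_integral_sub_integral_le {u : ℝ → ℝ} {H x y δ : ℝ} (hH : 0 ≤ H) (hδ : 0 < δ)
    (hxy : x + δ ≤ y) (hu : ∀ a ∈ Set.Icc x y, ∀ b ∈ Set.Icc x y, |u a - u b| ≤ H * √|a - b|) :
    |(∫ t in x..x + δ, u t) - ∫ t in y - δ..y, u t| ≤ H * √(y - x) * δ := by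
  set c := y - δ - x
  have hc : 0 ≤ c := by linarith
  have hcont := continuousOn_of_abs_sub_le_mul_sqrt hu
  have hleft : Set.uIcc x (x + δ) ⊆ Set.Icc x y := by
    rw [Set.uIcc_of_le (by linarith)]; exact Set.Icc_subset_Icc_right hxy
  have hright : Set.uIcc (y - δ) y ⊆ Set.Icc x y := by
    rw [Set.uIcc_of_le (by linarith)]; exact Set.Icc_subset_Icc_left (by linarith)
  have hshift : (∫ t in y - δ..y, u t) = ∫ t in x..x + δ, u (t + c) := by
    rw [intervalIntegral.integral_comp_add_right u c]
    congr 1 <;> ring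
  have hint : IntervalIntegrable (fun t ↦ u (t + c)) MeasureTheory.volume x (x + δ) := by
    have := ((hcont.mono hright).intervalIntegrable).comp_add_right c
    rwa [show y - δ - c = x by ring, show y - c = x + δ by ring] at this
  rw [hshift, ← intervalIntegral.integral_sub ((hcont.mono hleft).intervalIntegrable) hint]
  have hpoint : ∀ t ∈ Set.uIoc x (x + δ), ‖u t - u (t + c)‖ ≤ H * √(y - x) := by
    intro t ht
    have ht' := Set.uIoc_subset_uIcc ht
    rw [Set.uIcc_of_le (by linarith)] at ht'
    calc |u t - u (t + c)| ≤ H * √|t - (t + c)| :=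
          hu t (hleft (Set.uIoc_subset_uIcc ht)) (t + c) ⟨by linarith [ht'.1], by linarith [ht'.2]⟩
      _ ≤ H * √(y - x) := by
          gcongr
          rw [sub_add_cancel_left, abs_neg, abs_of_nonneg hc]
          linarith
  simpa [abs_of_pos hδ] using intervalIntegral.norm_integral_le_of_norm_le_const hpoint

theorem abs_avgLeft_sub_avgRight_le {u : ℝ → ℝ} {H x y : ℝ} {n : ℕ} (hH : 0 ≤ H)
    (hxy : x + (1 / 2) ^ (n + 1) ≤ y)
    (hu : ∀ a ∈ Set.Icc x y, ∀ b ∈ Set.Icc x y, |u a - u b| ≤ H * √|a - b|) :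
    |avgLeft u n x - avgRight u n y| ≤ H * √(y - x) := by
  have hδ : (0 : ℝ) < (1 / 2) ^ (n + 1) := by positivity
  have hmul : (2 : ℝ) ^ (n + 1) * (1 / 2) ^ (n + 1) = 1 := by
    rw [← mul_pow]; norm_num
  calc |avgLeft u n x - avgRight u n y|
      = 2 ^ (n + 1) * |(∫ t in x..x + (1 / 2) ^ (n + 1), u t)
          - ∫ t in y - (1 / 2) ^ (n + 1)..y, u t| := by
        rw [avgLeft, avgRight, ← mul_sub, abs_mul, abs_of_pos (by positivity)]
    _ ≤ 2 ^ (n + 1) * (H * √(y - x) * (1 / 2) ^ (n + 1)) := by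
        gcongr; exact abs_integral_sub_integral_le hH hδ hxy hu
    _ = H * √(y - x) := by rw [mul_comm, mul_assoc, mul_comm _ (2 ^ (n + 1)), hmul, mul_one]

theorem dyadic_node_add_le {n k l : ℕ} (hk : k < 2 ^ n) (hl : l < 2 ^ n) :
    (k : ℝ) / 2 ^ (n + 1) + (1 / 2) ^ (n + 1) ≤ 1 - (l : ℝ) / 2 ^ (n + 1) := by
  have hnat : k + 1 + l ≤ 2 ^ (n + 1) := by rw [pow_succ]; omega
  have hreal : (k : ℝ) + 1 + l ≤ 2 ^ (n + 1) := by exact_mod_cast hnat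
  rw [one_div_pow, ← sub_nonneg]
  have hP : (0 : ℝ) < 2 ^ (n + 1) := by positivity
  have : 1 - (l : ℝ) / 2 ^ (n + 1) - ((k : ℝ) / 2 ^ (n + 1) + 1 / 2 ^ (n + 1))
      = (2 ^ (n + 1) - (k + 1 + l)) / 2 ^ (n + 1) := by field_simp; ring
  rw [this]
  exact div_nonneg (by linarith) hP.le

theorem stmt7 (u : ℝ → ℝ) (H : ℝ) (hH : 0 ≤ H)
    (hu : ∀ x ∈ Set.Icc (0 : ℝ) 1, ∀ y ∈ Set.Icc (0 : ℝ) 1,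
      |u x - u y| ≤ H * Real.sqrt |x - y|)
    (n k l : ℕ) (hk : k < 2 ^ n) (hl : l < 2 ^ n) :
    |avgLeft u n ((k : ℝ) / 2 ^ (n + 1)) - avgRight u n (1 - (l : ℝ) / 2 ^ (n + 1))|
      ≤ H * Real.sqrt ((1 - (l : ℝ) / 2 ^ (n + 1)) - (k : ℝ) / 2 ^ (n + 1)) := by
  have hsub : Set.Icc ((k : ℝ) / 2 ^ (n + 1)) (1 - (l : ℝ) / 2 ^ (n + 1)) ⊆ Set.Icc 0 1 :=
    Set.Icc_subset_Icc (by positivity) (by simp only [sub_le_self_iff]; positivity)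
  exact abs_avgLeft_sub_avgRight_le hH (dyadic_node_add_le hk hl)
    fun a ha b hb ↦ hu a (hsub ha) b (hsub hb)
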